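/- Let k be odd and let G be a connected k-uniform hypergraph on {1,…,n} with at least one edge. Then a nonzero real vector x ∈ ℝ^n satisfies ((D−A) x^{k−1})_i = 0 for all i if and only if x is a nonzero constant vector, i.e., there exists γ ∈ ℝ, γ ≠ 0, with x_i = γ for all i. Consequently, up to real scaling the all-ones vector is the unique real eigenvector of the Laplacian tensor of G associated with the eigenvalue zero. -/

import Mathlib

open Finset

/-- Degree of vertex `i` in the hypergraph with edge set `E`. -/
def hdeg {n : ℕ} (E : Finset (Finset (Fin n))) (i : Fin n) : ℕ :=
  (E.filter fun e => i ∈ e).card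

/-- Laplacian tensor action `((D - A) x^{k-1})_i` over ℂ. -/
noncomputable def lapC (k : ℕ) {n : ℕ} (E : Finset (Finset (Fin n)))
    (x : Fin n → ℂ) (i : Fin n) : ℂ :=
  (hdeg E i : ℂ) * x i ^ (k - 1) -
    ∑ e ∈ E.filter (fun e => i ∈ e), ∏ j ∈ e.erase i, x j

/-- Signless Laplacian tensor action `((D + A) x^{k-1})_i` over ℂ. -/
noncomputable def slapC (k : ℕ) {n : ℕ} (E : Finset (Finset (Fin n)))
    (x : Fin n → ℂ) (i : Fin n) : ℂ :=
  (hdeg E i : ℂ) * x i ^ (k - 1) +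
    ∑ e ∈ E.filter (fun e => i ∈ e), ∏ j ∈ e.erase i, x j

/-- Laplacian tensor action `((D - A) x^{k-1})_i` over ℝ. -/
noncomputable def lapR (k : ℕ) {n : ℕ} (E : Finset (Finset (Fin n)))
    (x : Fin n → ℝ) (i : Fin n) : ℝ :=
  (hdeg E i : ℝ) * x i ^ (k - 1) -
    ∑ e ∈ E.filter (fun e => i ∈ e), ∏ j ∈ e.erase i, x j

/-- Signless Laplacian tensor action `((D + A) x^{k-1})_i` over ℝ. -/
noncomputable def slapR (k : ℕ) {n : ℕ} (E : Finset (Finset (Fin n)))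
    (x : Fin n → ℝ) (i : Fin n) : ℝ :=
  (hdeg E i : ℝ) * x i ^ (k - 1) +
    ∑ e ∈ E.filter (fun e => i ∈ e), ∏ j ∈ e.erase i, x j

/-- The hypergraph with edge set `E` is connected: every pair of distinct vertices is
joined by a chain of edges with consecutive edges intersecting. -/
def HConnected {n : ℕ} (E : Finset (Finset (Fin n))) : Prop :=
  ∀ i j : Fin n, i ≠ j → ∃ m : ℕ, ∃ es : Fin (m + 1) → Finset (Fin n),
    (∀ r, es r ∈ E) ∧ i ∈ es 0 ∧ j ∈ es (Fin.last m) ∧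
    ∀ r : Fin m, (es r.castSucc ∩ es r.succ).Nonempty

/-!
Let `M = max |x_i| > 0`, attained at `i`. As `k - 1` is even, the eigen-equation at `i` reads
`d_i M^{k-1} = ∑_{e ∋ i} ∏_{j ∈ e ∖ i} x_j`, and each of the `d_i` products is at most
`M^{k-1}`; so every one of them equals `M^{k-1}`, which forces `|x_j| = M` on every edge
through `i`. By connectivity `|x| ≡ M`, so every vertex is of this kind, and then
`x_i M^{k-1} = ∏_{j ∈ e} x_j = x_j M^{k-1}` for `i, j` in a common edge. Connectivity again makes
`x` constant.
-/

theorem HConnected.forall_of_edge_closed {n : ℕ} {E : Finset (Finset (Fin n))}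
    (hconn : HConnected E) {P : Fin n → Prop}
    (hP : ∀ e ∈ E, ∀ i ∈ e, P i → ∀ j ∈ e, P j) {i : Fin n} (hi : P i) (j : Fin n) : P j := by
  obtain rfl | hij := eq_or_ne i j
  · exact hi
  obtain ⟨m, es, hes, hi0, hjm, hlink⟩ := hconn i j hij
  have hchain : ∀ r, ∀ v ∈ es r, P v := by
    intro r
    induction r using Fin.induction with
    | zero => exact hP _ (hes 0) i hi0 hi
    | succ r ih =>
      obtain ⟨w, hw⟩ := hlink r
      rw [mem_inter] at hw
      exact hP _ (hes _) w hw.2 (ih w hw.1)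
  exact hchain _ j hjm

section Ordered

variable {ι R : Type*} [CommRing R] [LinearOrder R] [IsStrictOrderedRing R]

theorem Finset.abs_prod_le_pow_card {s : Finset ι} {f : ι → R} {M : R}
    (hf : ∀ j ∈ s, |f j| ≤ M) : |∏ j ∈ s, f j| ≤ M ^ #s := by
  rw [abs_prod, ← prod_const]
  exact prod_le_prod (fun j _ => abs_nonneg _) hf

theorem Finset.eq_of_prod_eq_pow_card {s : Finset ι} {f : ι → R} {M : R} (hM : 0 < M)
    (hf₀ : ∀ j ∈ s, 0 ≤ f j) (hfM : ∀ j ∈ s, f j ≤ M) (hprod : ∏ j ∈ s, f j = M ^ #s)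
    {j : ι} (hj : j ∈ s) : f j = M := by
  classical
  have hrest : ∏ l ∈ s.erase j, f l ≤ M ^ #(s.erase j) := by
    rw [← prod_const]
    exact prod_le_prod (fun l hl => hf₀ l (mem_of_mem_erase hl))
      (fun l hl => hfM l (mem_of_mem_erase hl))
  have hsplit : M * M ^ #(s.erase j) ≤ f j * M ^ #(s.erase j) := calc
    M * M ^ #(s.erase j) = ∏ l ∈ s, f l := by
      rw [hprod, ← pow_succ', card_erase_add_one hj]
    _ = f j * ∏ l ∈ s.erase j, f l := (mul_prod_erase s f hj).symm
    _ ≤ f j * M ^ #(s.erase j) := mul_le_mul_of_nonneg_left hrest (hf₀ j hj)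
  exact le_antisymm (hfM j hj) (le_of_mul_le_mul_right hsplit (pow_pos hM _))

theorem Finset.eq_of_card_mul_le_sum {s : Finset ι} {a : ι → R} {c : R}
    (ha : ∀ e ∈ s, a e ≤ c) (hsum : #s * c ≤ ∑ e ∈ s, a e) {e : ι} (he : e ∈ s) : a e = c := by
  refine (sum_eq_sum_iff_of_le ha).mp (le_antisymm (sum_le_sum ha) ?_) e he
  rwa [sum_const, nsmul_eq_mul]

end Ordered

section Laplacian

variable {n k : ℕ} {E : Finset (Finset (Fin n))} {x : Fin n → ℝ} {M : ℝ}

theorem lapR_eq_zero_iff {i : Fin n} :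
    lapR k E x i = 0 ↔
      ∑ e ∈ E.filter (fun e => i ∈ e), ∏ j ∈ e.erase i, x j = hdeg E i * x i ^ (k - 1) := by
  rw [lapR, sub_eq_zero, eq_comm]

variable (hE : ∀ e ∈ E, e.card = k)
include hE

theorem lapR_const (γ : ℝ) (i : Fin n) : lapR k E (fun _ => γ) i = 0 := by
  have hterm : ∀ e ∈ E.filter (fun e => i ∈ e), ∏ _j ∈ e.erase i, γ = γ ^ (k - 1) := by
    intro e he
    rw [mem_filter] at he
    rw [prod_const, card_erase_of_mem he.2, hE e he.1]
  rw [lapR_eq_zero_iff, sum_congr rfl hterm, sum_const, nsmul_eq_mul, hdeg]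

theorem prod_erase_eq_pow_of_abs_eq_max (hmax : ∀ v, |x v| ≤ M) (hk : Even (k - 1))
    {i : Fin n} (hi : |x i| = M) (hlap : lapR k E x i = 0) {e : Finset (Fin n)} (he : e ∈ E)
    (hie : i ∈ e) :
    ∏ j ∈ e.erase i, x j = M ^ (k - 1) := by
  have hterm : ∀ e ∈ E.filter (fun e => i ∈ e), ∏ j ∈ e.erase i, x j ≤ M ^ (k - 1) := by
    intro e he
    rw [mem_filter] at he
    rw [← hE e he.1, ← card_erase_of_mem he.2]
    exact (le_abs_self _).trans (abs_prod_le_pow_card fun j _ => hmax j)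
  have hsum : #(E.filter (fun e => i ∈ e)) * M ^ (k - 1) ≤
      ∑ e ∈ E.filter (fun e => i ∈ e), ∏ j ∈ e.erase i, x j := by
    rw [lapR_eq_zero_iff.mp hlap, ← hk.pow_abs (x i), hi, hdeg]
  exact eq_of_card_mul_le_sum hterm hsum (mem_filter.mpr ⟨he, hie⟩)

theorem abs_eq_of_mem_edge_of_abs_eq_max (hmax : ∀ v, |x v| ≤ M) (hk : Even (k - 1))
    (hM : 0 < M) {i : Fin n} (hi : |x i| = M) (hlap : lapR k E x i = 0) {e : Finset (Fin n)}
    (he : e ∈ E) (hie : i ∈ e) {j : Fin n} (hje : j ∈ e) : |x j| = M := by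
  obtain rfl | hji := eq_or_ne j i
  · exact hi
  have hprod : ∏ l ∈ e.erase i, |x l| = M ^ #(e.erase i) := by
    rw [← abs_prod, prod_erase_eq_pow_of_abs_eq_max hE hmax hk hi hlap he hie,
      card_erase_of_mem hie, hE e he, abs_of_nonneg (pow_nonneg hM.le _)]
  exact eq_of_prod_eq_pow_card hM (fun _ _ => abs_nonneg _) (fun l _ => hmax l) hprod
    (mem_erase.mpr ⟨hji, hje⟩)

theorem eq_of_mem_edge_of_abs_eq (hk : Even (k - 1)) (hM : 0 < M) (habs : ∀ v, |x v| = M)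
    (hlap : ∀ v, lapR k E x v = 0) {e : Finset (Fin n)} (he : e ∈ E) {i j : Fin n}
    (hie : i ∈ e) (hje : j ∈ e) : x i = x j := by
  have hedge : ∀ v ∈ e, x v * M ^ (k - 1) = ∏ l ∈ e, x l := fun v hve => by
    rw [← prod_erase_eq_pow_of_abs_eq_max hE (fun u => (habs u).le) hk (habs v) (hlap v) he hve,
      mul_prod_erase _ _ hve]
  exact mul_right_cancel₀ (pow_pos hM _).ne' ((hedge i hie).trans (hedge j hje).symm)

end Laplacian

theorem stmt_13_general {n k : ℕ} (hn : k ≤ n) (hkodd : Odd k)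
    (E : Finset (Finset (Fin n))) (hE : ∀ e ∈ E, e.card = k)
    (hconn : HConnected E)
    (x : Fin n → ℝ) :
    (x ≠ 0 ∧ ∀ i, lapR k E x i = 0) ↔
      ∃ γ : ℝ, γ ≠ 0 ∧ ∀ i, x i = γ := by
  have hk : Even (k - 1) := hkodd.tsub_odd odd_one
  have : Nonempty (Fin n) := ⟨⟨0, by obtain ⟨c, rfl⟩ := hkodd; omega⟩⟩
  constructor
  · rintro ⟨hx, hlap⟩
    obtain ⟨i₀, -, hi₀⟩ := exists_max_image univ (fun v => |x v|) univ_nonempty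
    have hmax : ∀ v, |x v| ≤ |x i₀| := fun v => hi₀ v (mem_univ v)
    obtain ⟨v, hv⟩ := Function.ne_iff.mp hx
    have hM : 0 < |x i₀| := (abs_pos.mpr hv).trans_le (hmax v)
    have habs : ∀ v, |x v| = |x i₀| := hconn.forall_of_edge_closed
      (fun _ he _ hie hi _ hje =>
        abs_eq_of_mem_edge_of_abs_eq_max hE hmax hk hM hi (hlap _) he hie hje) rfl
    have hconst : ∀ v, x v = x i₀ := hconn.forall_of_edge_closed
      (fun _ he _ hie hi _ hje =>
        (eq_of_mem_edge_of_abs_eq hE hk hM habs hlap he hje hie).trans hi) rfl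
    exact ⟨x i₀, abs_pos.mp hM, hconst⟩
  · rintro ⟨γ, hγ, hxγ⟩
    obtain rfl : x = fun _ => γ := funext hxγ
    exact ⟨Function.ne_iff.mpr ⟨Classical.arbitrary _, hγ⟩, lapR_const hE γ⟩

theorem stmt_13 {n k : ℕ} (hk : 3 ≤ k) (hn : k ≤ n) (hkodd : Odd k)
    (E : Finset (Finset (Fin n))) (hE : ∀ e ∈ E, e.card = k)
    (hconn : HConnected E) (hne : E.Nonempty)
    (x : Fin n → ℝ) :
    (x ≠ 0 ∧ ∀ i, lapR k E x i = 0) ↔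
      ∃ γ : ℝ, γ ≠ 0 ∧ ∀ i, x i = γ :=
  stmt_13_general hn hkodd E hE hconn x
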